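/- If p ∈ ℕ is odd, then for every domain G ⊂ ℂⁿ, every a ∈ G and every X ∈ ℂⁿ one has S^(p)_G(a;X) = 0. -/

import Mathlib

open Filter MeasureTheory Topology Complex

noncomputable section

/-- The extended-real logarithm: `elog t = -∞` for `t ≤ 0`, `log t` otherwise. -/
def elog (t : ℝ) : EReal := if t ≤ 0 then ⊥ else ((Real.log t : ℝ) : EReal)

/-- The canonical map `EReal → ℝ≥0∞` (negative values and `⊥` go to `0`). -/
def EReal.toENNR (x : EReal) : ENNReal := if x = ⊤ then ⊤ else ENNReal.ofReal x.toReal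

/-- Plurisubharmonicity of an `EReal`-valued function `f` on a set `G ⊆ ℂⁿ`:
`f` is upper semicontinuous on `G` and satisfies the sub-mean value inequality over
every circle lying in a complex line whose corresponding closed disc is contained
in `G`.  The sub-mean inequality `f(a) ≤ (2π)⁻¹ ∫₀^{2π} f(a + r e^{iθ} b) dθ` is
expressed, for every real upper bound `M` of `f` on the circle, in the equivalent
form `∫₀^{2π} (M - f(a + r e^{iθ} b)) dθ ≤ 2π (M - f(a))`, using the lower
integral of `ℝ≥0∞`-valued functions (which handles the value `-∞` correctly). -/
def PSHOn {n : ℕ} (f : (Fin n → ℂ) → EReal) (G : Set (Fin n → ℂ)) : Prop :=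
  UpperSemicontinuousOn f G ∧
  ∀ a ∈ G, ∀ b : Fin n → ℂ, ∀ r : ℝ, 0 < r →
    (∀ μ : ℂ, ‖μ‖ ≤ r → a + μ • b ∈ G) →
    ∀ M : ℝ, (∀ θ : ℝ, f (a + ((r : ℂ) * Complex.exp (θ * Complex.I)) • b) ≤ (M : EReal)) →
      (∫⁻ θ in Set.Ioc (0 : ℝ) (2 * Real.pi),
          ((M : EReal) - f (a + ((r : ℂ) * Complex.exp (θ * Complex.I)) • b)).toENNR)
        ≤ ENNReal.ofReal (2 * Real.pi) * ((M : EReal) - f a).toENNR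

/-- The class of all functions `u : G → [0,1)` with `log u` plurisubharmonic on `G`,
`u` of class `C^p` in a neighbourhood of `a`, and `u(z) ≤ C ‖z-a‖^p` on `G` for some
`C > 0`; i.e. the class of all `u` with `u^{1/p} ∈ 𝒮^{(p)}_G(a)`. -/
def SibonyClass {n : ℕ} (p : ℕ) (G : Set (Fin n → ℂ)) (a : Fin n → ℂ) :
    Set ((Fin n → ℂ) → ℝ) :=
  {u | (∀ z ∈ G, 0 ≤ u z ∧ u z < 1) ∧ PSHOn (fun z => elog (u z)) G ∧
    (∃ V ∈ 𝓝 a, ContDiffOn ℝ p u V) ∧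
    ∃ C : ℝ, 0 < C ∧ ∀ z ∈ G, u z ≤ C * ‖z - a‖ ^ p}

/-- The class `𝒦_G(a)`:  all `u : G → [0,1)` with `log u` plurisubharmonic on `G`
and `u(z) ≤ C ‖z-a‖` on `G` for some `C > 0`. -/
def GreenClass {n : ℕ} (G : Set (Fin n → ℂ)) (a : Fin n → ℂ) :
    Set ((Fin n → ℂ) → ℝ) :=
  {u | (∀ z ∈ G, 0 ≤ u z ∧ u z < 1) ∧ PSHOn (fun z => elog (u z)) G ∧
    ∃ C : ℝ, 0 < C ∧ ∀ z ∈ G, u z ≤ C * ‖z - a‖}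

/-- `limsup_{ℂ ∋ μ → 0} v(a + μ X) / |μ|`. -/
def dilat {n : ℕ} (v : (Fin n → ℂ) → ℝ) (a X : Fin n → ℂ) : ℝ :=
  Filter.limsup (fun μ : ℂ => v (a + μ • X) / ‖μ‖) (𝓝[≠] (0 : ℂ))

/-- The higher order Sibony function `s^{(p)}_G(a,z)`. -/
def sibonyFun {n : ℕ} (p : ℕ) (G : Set (Fin n → ℂ)) (a z : Fin n → ℂ) : ℝ :=
  sSup ((fun u => u z ^ (1 / (p : ℝ))) '' SibonyClass p G a)

/-- The higher order Sibony pseudometric `S^{(p)}_G(a;X)`. -/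
def sibonyMetric {n : ℕ} (p : ℕ) (G : Set (Fin n → ℂ)) (a X : Fin n → ℂ) : ℝ :=
  sSup ((fun u => dilat (fun z => u z ^ (1 / (p : ℝ))) a X) '' SibonyClass p G a)

/-- The pluricomplex Green function `g_G(a,z)`. -/
def greenFun {n : ℕ} (G : Set (Fin n → ℂ)) (a z : Fin n → ℂ) : ℝ :=
  sSup ((fun u => u z) '' GreenClass G a)

/-- The Azukawa pseudometric `A_G(a;X)`. -/
def azukawa {n : ℕ} (G : Set (Fin n → ℂ)) (a X : Fin n → ℂ) : ℝ :=
  sSup ((fun u => dilat u a X) '' GreenClass G a)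

/-- The Möbius pseudodistance `m_G(a,z)`. -/
def mobiusFun {n : ℕ} (G : Set (Fin n → ℂ)) (a z : Fin n → ℂ) : ℝ :=
  sSup {t | ∃ f : (Fin n → ℂ) → ℂ, DifferentiableOn ℂ f G ∧
    (∀ w ∈ G, ‖f w‖ < 1) ∧ f a = 0 ∧ t = ‖f z‖}

/-- The Carathéodory–Reiffen pseudometric `γ_G(a;X)`. -/
def caratheodory {n : ℕ} (G : Set (Fin n → ℂ)) (a X : Fin n → ℂ) : ℝ :=
  sSup {t | ∃ f : (Fin n → ℂ) → ℂ, DifferentiableOn ℂ f G ∧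
    (∀ w ∈ G, ‖f w‖ < 1) ∧ f a = 0 ∧ t = ‖fderiv ℂ f a X‖}

/-!
Let `u` be in the class. Restricted to a real line `t ↦ a + t • v`, the function `u` is `C^p`,
nonnegative and `O(|t|^p)`, so its derivatives of order `< p` vanish at `0`; its `p`-th
derivative is `p!` times the limit of `u (a + t • v) / t ^ p`, which is `≥ 0` for `t > 0` and
`≤ 0` for `t < 0` because `p` is odd, hence it vanishes too. Taylor's formula with Lagrange
remainder along segments and the continuity of `D^p u` at `a` then give
`u (a + x) = o(‖x‖ ^ p)` uniformly in the direction of `x`, so `u^{1/p} (a + λ X) / |λ| → 0`.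
Since `0` belongs to the class, the supremum is `0`.
-/

open Asymptotics Set
open scoped Nat

theorem isLittleO_sub_iteratedDeriv_mul_pow {h : ℝ → ℝ} {k : ℕ} (hh : ContDiffAt ℝ k h 0)
    (hzero : ∀ j < k, iteratedDeriv j h 0 = 0) :
    (fun t => h t - iteratedDeriv k h 0 / k ! * t ^ k) =o[𝓝 0] fun t => t ^ k := by
  obtain ⟨u, hu, hhu⟩ := hh.contDiffOn le_rfl (by simp)
  obtain ⟨r, hr, hru⟩ := Metric.mem_nhds_iff.1 hu
  rw [Real.ball_eq_Ioo, zero_sub, zero_add] at hru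
  have h0 : (0 : ℝ) ∈ Ioo (-r) r := ⟨by linarith, hr⟩
  have hT := taylor_isLittleO (convex_Ioo _ _) h0 (hhu.mono hru)
  rw [nhdsWithin_eq_nhds.2 (isOpen_Ioo.mem_nhds h0)] at hT
  simp only [sub_zero] at hT
  refine hT.congr_left fun t => ?_
  rw [taylor_within_apply, Finset.sum_range_succ, Finset.sum_eq_zero]
  · rw [iteratedDerivWithin_of_isOpen isOpen_Ioo h0, smul_eq_mul, zero_add]
    ring
  · intro j hj
    rw [iteratedDerivWithin_of_isOpen isOpen_Ioo h0, hzero j (Finset.mem_range.1 hj), smul_zero]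

theorem eq_zero_of_isLittleO_const_mul_pow {c : ℝ} {k : ℕ}
    (h : (fun t : ℝ => c * t ^ k) =o[𝓝 0] fun t => t ^ k) : c = 0 := by
  by_contra hc
  refine isLittleO_irrefl ?_ ((isLittleO_const_mul_left_iff hc).1 h)
  exact (eventually_nhdsWithin_of_forall (s := {0}ᶜ) fun _ ht => pow_ne_zero k ht).frequently
    |>.filter_mono nhdsWithin_le_nhds

theorem iteratedDeriv_eq_zero_of_isBigO_pow {h : ℝ → ℝ} {p : ℕ} (hh : ContDiffAt ℝ p h 0)
    (hO : h =O[𝓝 0] fun t => t ^ p) : ∀ k < p, iteratedDeriv k h 0 = 0 := by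
  intro k
  induction k using Nat.strong_induction_on with
  | _ k ih =>
  intro hk
  have hTaylor := isLittleO_sub_iteratedDeriv_mul_pow (hh.of_le (mod_cast hk.le))
    fun j hj => ih j hj (hj.trans hk)
  have hsmall : h =o[𝓝 0] fun t => t ^ k := hO.trans_isLittleO (isLittleO_pow_pow hk)
  have := eq_zero_of_isLittleO_const_mul_pow
    ((hsmall.sub hTaylor).congr_left fun t => sub_sub_cancel _ _)
  simpa [Nat.factorial_ne_zero] using this

theorem iteratedDeriv_eq_zero_of_nonneg_of_odd {h : ℝ → ℝ} {p : ℕ} (hp : Odd p)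
    (hh : ContDiffAt ℝ p h 0) (hzero : ∀ j < p, iteratedDeriv j h 0 = 0)
    (hnn : ∀ᶠ t in 𝓝 0, 0 ≤ h t) : iteratedDeriv p h 0 = 0 := by
  set c := iteratedDeriv p h 0 / (p ! : ℝ)
  have hlim : Tendsto (fun t => h t / t ^ p) (𝓝[≠] 0) (𝓝 c) := by
    have := ((isLittleO_sub_iteratedDeriv_mul_pow hh hzero).tendsto_div_nhds_zero.mono_left
      (nhdsWithin_le_nhds (s := {0}ᶜ))).add_const c
    rw [zero_add] at this
    refine this.congr' (eventually_nhdsWithin_of_forall fun t ht => ?_)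
    rw [sub_div, mul_div_cancel_right₀ _ (pow_ne_zero p ht), sub_add_cancel]
  have hc_nonneg : 0 ≤ c := by
    refine ge_of_tendsto (hlim.mono_left (nhdsWithin_mono (s := Ioi 0) _ fun _ => ne_of_gt)) ?_
    filter_upwards [nhdsWithin_le_nhds hnn, self_mem_nhdsWithin] with t ht htpos
    exact div_nonneg ht (pow_pos htpos p).le
  have hc_nonpos : c ≤ 0 := by
    refine le_of_tendsto (hlim.mono_left (nhdsWithin_mono (s := Iio 0) _ fun _ => ne_of_lt)) ?_
    filter_upwards [nhdsWithin_le_nhds hnn, self_mem_nhdsWithin] with t ht htneg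
    exact div_nonpos_of_nonneg_of_nonpos ht (hp.pow_neg htneg).le
  simpa [c, Nat.factorial_ne_zero] using le_antisymm hc_nonpos hc_nonneg

section NormedSpace

variable {E F : Type*} [NormedAddCommGroup E] [NormedSpace ℝ E]
  [NormedAddCommGroup F] [NormedSpace ℝ F]

theorem iteratedDeriv_comp_smul_right {f : E → F} {k : ℕ} {v : E} {t : ℝ}
    (hf : ContDiffAt ℝ k f (t • v)) :
    iteratedDeriv k (fun s : ℝ => f (s • v)) t = iteratedFDeriv ℝ k f (t • v) fun _ => v := by
  obtain ⟨u, hu, hfu⟩ := hf.contDiffOn le_rfl (by simp)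
  set L := ContinuousLinearMap.toSpanSingleton ℝ v
  have hU : IsOpen (L ⁻¹' interior u) := isOpen_interior.preimage L.continuous
  have ht : L t ∈ interior u := mem_interior_iff_mem_nhds.2 hu
  rw [iteratedDeriv_eq_iteratedFDeriv, ← iteratedFDerivWithin_of_isOpen k hU ht,
    show (fun s : ℝ => f (s • v)) = f ∘ L from rfl,
    L.iteratedFDerivWithin_comp_right (hfu.mono interior_subset) isOpen_interior.uniqueDiffOn
      hU.uniqueDiffOn ht le_rfl,
    iteratedFDerivWithin_of_isOpen k isOpen_interior ht]
  simp [L]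

theorem exists_eq_iteratedFDeriv_div_factorial {f : E → ℝ} {m : ℕ} {x : E}
    (hf : ∀ t ∈ Icc (0 : ℝ) 1, ContDiffAt ℝ (m + 1) f (t • x))
    (hzero : ∀ k ≤ m, iteratedFDeriv ℝ k f 0 (fun _ => x) = 0) :
    ∃ ξ ∈ Ioo (0 : ℝ) 1, f x = iteratedFDeriv ℝ (m + 1) f (ξ • x) (fun _ => x) / (m + 1)! := by
  set g : ℝ → ℝ := fun t => f (t • x)
  have hg : ∀ t ∈ Icc (0 : ℝ) 1, ContDiffAt ℝ (m + 1) g t := fun t ht =>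
    (hf t ht).comp t (contDiff_id.smul contDiff_const).contDiffAt
  have hg_deriv : ∀ k ≤ m + 1, ∀ t ∈ Icc (0 : ℝ) 1,
      iteratedDeriv k g t = iteratedFDeriv ℝ k f (t • x) (fun _ => x) := fun k hk t ht =>
    iteratedDeriv_comp_smul_right ((hf t ht).of_le (mod_cast hk))
  have h0 : (0 : ℝ) ∈ Icc (0 : ℝ) 1 := left_mem_Icc.2 zero_le_one
  obtain ⟨ξ, hξ, hTaylor⟩ := taylor_mean_remainder_lagrange_iteratedDeriv zero_ne_one
    (by rw [uIcc_of_le zero_le_one]; exact fun t ht => (hg t ht).contDiffWithinAt)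
  rw [uIoo_of_le zero_le_one] at hξ
  have hpoly : taylorWithinEval g m (uIcc 0 1) 0 1 = 0 := by
    rw [uIcc_of_le zero_le_one, taylor_within_apply]
    refine Finset.sum_eq_zero fun k hk => ?_
    have hk : k ≤ m := Nat.lt_succ_iff.1 (Finset.mem_range.1 hk)
    rw [iteratedDerivWithin_eq_iteratedDeriv (uniqueDiffOn_Icc zero_lt_one)
      ((hg 0 h0).of_le (mod_cast hk.trans m.le_succ)) h0, hg_deriv k (hk.trans m.le_succ) 0 h0,
      zero_smul, hzero k hk, smul_zero]
  refine ⟨ξ, hξ, ?_⟩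
  rw [hpoly, sub_zero, hg_deriv _ le_rfl ξ (Ioo_subset_Icc_self hξ)] at hTaylor
  simpa [g] using hTaylor

theorem isLittleO_pow_of_iteratedFDeriv_diag_eq_zero {f : E → ℝ} {p : ℕ}
    (hf : ContDiffAt ℝ p f 0) (hzero : ∀ k ≤ p, ∀ v, iteratedFDeriv ℝ k f 0 (fun _ => v) = 0) :
    f =o[𝓝 0] fun x => ‖x‖ ^ p := by
  rcases p with _ | m
  · have hf0 : f 0 = 0 := by simpa using hzero 0 le_rfl 0
    simpa [isLittleO_one_iff, hf0] using hf.continuousAt.tendsto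
  set D := iteratedFDeriv ℝ (m + 1) f
  refine isLittleO_iff.2 fun ε hε => ?_
  have hD : ∀ᶠ y in 𝓝 0, ‖D y - D 0‖ < ε :=
    (hf.continuousAt_iteratedFDeriv le_rfl).eventually (Metric.ball_mem_nhds _ hε) |>.mono
      fun y hy => by rwa [← dist_eq_norm]
  obtain ⟨δ, hδ, hball⟩ := Metric.eventually_nhds_iff_ball.1 (hD.and (hf.eventually (by simp)))
  filter_upwards [Metric.ball_mem_nhds 0 hδ] with x hx
  have hseg : ∀ t ∈ Icc (0 : ℝ) 1, t • x ∈ Metric.ball 0 δ := fun t ht => by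
    rw [mem_ball_zero_iff, norm_smul, Real.norm_of_nonneg ht.1] at *
    exact (mul_le_of_le_one_left (norm_nonneg x) ht.2).trans_lt hx
  obtain ⟨ξ, hξ, hfx⟩ := exists_eq_iteratedFDeriv_div_factorial
    (fun t ht => (hball _ (hseg t ht)).2) fun k hk => hzero k (hk.trans m.le_succ) x
  have hD0 : D 0 (fun _ => x) = 0 := hzero (m + 1) le_rfl x
  calc ‖f x‖ ≤ ‖(D (ξ • x) - D 0) (fun _ => x)‖ := by
        rw [hfx, sub_apply, hD0, sub_zero, norm_div]
        exact div_le_self (norm_nonneg _) (by simp [Nat.one_le_iff_ne_zero, Nat.factorial_ne_zero])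
    _ ≤ ‖D (ξ • x) - D 0‖ * ‖x‖ ^ (m + 1) :=
        ContinuousMultilinearMap.le_opNorm_mul_pow_of_le _ (pi_norm_const_le x)
    _ ≤ ε * ‖‖x‖ ^ (m + 1)‖ := by
        rw [norm_pow, norm_norm]
        gcongr
        exact (hball _ (hseg ξ (Ioo_subset_Icc_self hξ))).1.le

theorem isLittleO_pow_of_nonneg_of_isBigO_pow {f : E → ℝ} {p : ℕ} (hp : Odd p)
    (hf : ContDiffAt ℝ p f 0) (hnn : ∀ᶠ x in 𝓝 0, 0 ≤ f x) (hO : f =O[𝓝 0] fun x => ‖x‖ ^ p) :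
    f =o[𝓝 0] fun x => ‖x‖ ^ p := by
  refine isLittleO_pow_of_iteratedFDeriv_diag_eq_zero hf fun k hk v => ?_
  have hray : Tendsto (fun t : ℝ => t • v) (𝓝 0) (𝓝 0) := by
    simpa using (tendsto_id : Tendsto id (𝓝 (0 : ℝ)) _).smul_const v
  have hh : ContDiffAt ℝ p (fun t : ℝ => f (t • v)) 0 :=
    (by simpa using hf : ContDiffAt ℝ p f ((0 : ℝ) • v)).comp 0
      (contDiff_id.smul contDiff_const).contDiffAt
  have hhO : (fun t : ℝ => f (t • v)) =O[𝓝 0] fun t => t ^ p :=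
    (hO.comp_tendsto hray).trans <| IsBigO.of_bound (‖v‖ ^ p) <| Eventually.of_forall fun t => by
      simp [norm_smul, mul_pow, mul_comm]
  have hzero := iteratedDeriv_eq_zero_of_isBigO_pow hh hhO
  have hray_deriv : iteratedDeriv k (fun t : ℝ => f (t • v)) 0 = 0 := by
    rcases hk.lt_or_eq with hk | rfl
    · exact hzero k hk
    · exact iteratedDeriv_eq_zero_of_nonneg_of_odd hp hh hzero (hray.eventually hnn)
  rwa [iteratedDeriv_comp_smul_right (by simpa using hf.of_le (mod_cast hk)), zero_smul]
    at hray_deriv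

end NormedSpace

theorem pshOn_const_bot {n : ℕ} (G : Set (Fin n → ℂ)) : PSHOn (fun _ => ⊥) G := by
  refine ⟨upperSemicontinuousOn_const, fun _ _ _ r _ _ M _ => ?_⟩
  have : ((M : EReal) - ⊥).toENNR = ⊤ := by simp [EReal.toENNR]
  rw [this, ENNReal.mul_top (by simp [Real.pi_pos])]
  exact le_top

theorem zero_mem_sibonyClass {n : ℕ} (p : ℕ) (G : Set (Fin n → ℂ)) (a : Fin n → ℂ) :
    (0 : (Fin n → ℂ) → ℝ) ∈ SibonyClass p G a := by
  refine ⟨fun _ _ => ⟨le_rfl, one_pos⟩, ?_, ⟨univ, univ_mem, contDiffOn_const⟩,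
    1, one_pos, fun _ _ => by positivity⟩
  simpa [elog] using pshOn_const_bot G

theorem dilat_eq_zero_of_mem_sibonyClass {n p : ℕ} (hp : Odd p) {G : Set (Fin n → ℂ)}
    (hG : IsOpen G) {a : Fin n → ℂ} (ha : a ∈ G) (X : Fin n → ℂ) {u : (Fin n → ℂ) → ℝ}
    (hu : u ∈ SibonyClass p G a) : dilat (fun z => u z ^ (1 / (p : ℝ))) a X = 0 := by
  obtain ⟨hu01, -, ⟨V, hV, huV⟩, C, -, hub⟩ := hu
  have hGa : ∀ᶠ x in 𝓝 (0 : Fin n → ℂ), a + x ∈ G :=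
    (continuous_const_add a).tendsto' 0 a (add_zero a) |>.eventually (hG.mem_nhds ha)
  have hg : ContDiffAt ℝ p (fun x => u (a + x)) 0 :=
    (huV.contDiffAt (by simpa using hV)).comp 0 (contDiffAt_const.add contDiffAt_id)
  have hgO : (fun x => u (a + x)) =O[𝓝 0] fun x => ‖x‖ ^ p :=
    IsBigO.of_bound C <| hGa.mono fun x hx => by
      simpa [Real.norm_of_nonneg (hu01 _ hx).1] using hub _ hx
  have hgo := isLittleO_pow_of_nonneg_of_isBigO_pow hp hg (hGa.mono fun x hx => (hu01 _ hx).1) hgO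
  have hline : Tendsto (fun μ : ℂ => μ • X) (𝓝 0) (𝓝 0) := by
    simpa using (tendsto_id : Tendsto id (𝓝 (0 : ℂ)) _).smul_const X
  have hlo : (fun μ : ℂ => u (a + μ • X)) =o[𝓝 0] fun μ => ‖μ‖ ^ p :=
    (hgo.comp_tendsto hline).trans_isBigO <| IsBigO.of_bound (‖X‖ ^ p) <|
      Eventually.of_forall fun μ => by simp [norm_smul, mul_pow, mul_comm]
  have hroot : (fun μ : ℂ => u (a + μ • X) ^ (1 / (p : ℝ))) =o[𝓝 0] fun μ => ‖μ‖ := by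
    refine (hlo.rpow (by simpa using hp.pos) (Eventually.of_forall fun μ => by positivity))
      |>.congr_right fun μ => ?_
    rw [← Real.rpow_natCast, ← Real.rpow_mul (norm_nonneg μ),
      mul_one_div_cancel (by exact_mod_cast hp.pos.ne'), Real.rpow_one]
  exact (hroot.tendsto_div_nhds_zero.mono_left nhdsWithin_le_nhds).limsup_eq

theorem sibonyMetric_eq_zero_of_odd_general {n p : ℕ} (hp : Odd p)
    (G : Set (Fin n → ℂ)) (hGo : IsOpen G)
    (a : Fin n → ℂ) (ha : a ∈ G) (X : Fin n → ℂ) :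
    sibonyMetric p G a X = 0 := by
  rw [sibonyMetric, image_congr fun u hu => dilat_eq_zero_of_mem_sibonyClass hp hGo ha X hu,
    Set.Nonempty.image_const ⟨0, zero_mem_sibonyClass p G a⟩, csSup_singleton]

/-- If `p ∈ ℕ` is odd, then for every domain `G ⊆ ℂⁿ`, every `a ∈ G`
and every `X ∈ ℂⁿ` one has `S^{(p)}_G(a;X) = 0`. -/
theorem sibonyMetric_eq_zero_of_odd {n p : ℕ} (hp : Odd p)
    (G : Set (Fin n → ℂ)) (hGo : IsOpen G) (hGc : IsConnected G)
    (a : Fin n → ℂ) (ha : a ∈ G) (X : Fin n → ℂ) :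
    sibonyMetric p G a X = 0 :=
  sibonyMetric_eq_zero_of_odd_general hp G hGo a ha X
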